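/- Let E be a normed space, 1 ≤ p ≤ q < ∞, and suppose the composition operator C_f generated by f : E → E maps BV_p([a,b],E) into BV_q([a,b],E) and is locally bounded. Then f is Hölder continuous on bounded subsets of E with exponent p/q. -/

import Mathlib

open scoped ENNReal NNReal

noncomputable def pVar {E : Type*} [NormedAddCommGroup E] (p a b : ℝ) (x : ℝ → E) : ℝ≥0∞ :=
  ⨆ (n : ℕ) (t : Fin (n + 1) → ℝ) (_ : StrictMono t) (_ : t 0 = a)
    (_ : t (Fin.last n) = b),
    ∑ i : Fin n, (‖x (t i.succ) - x (t i.castSucc)‖₊ : ℝ≥0∞) ^ p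

/-!
Test local boundedness on zigzag functions, which jump `k` times between two points `u` and `w`
of a ball of radius `R`: such a function has `p`-variation `k ‖u - w‖ ^ p`, and its image under
`f` has `q`-variation `k ‖f u - f w‖ ^ q`. Taking `k ≈ (2R / ‖u - w‖) ^ p` keeps the `BV_p`-norm
below `3R`, so `k ^ (1/q) ‖f u - f w‖ ≤ M(3R)`, which is the Hölder estimate with exponent `p/q`.
-/

open Finset

theorem Fin.sum_univ_succ_sub_castSucc {M : Type*} [AddCommGroup M] {n : ℕ}
    (f : Fin (n + 1) → M) :
    ∑ i : Fin n, (f i.succ - f i.castSucc) = f (Fin.last n) - f 0 := by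
  cases n with
  | zero => simp
  | succ m => simpa [← Fin.top_eq_last, Finset.Iic_top] using Fin.sum_Iic_sub (Fin.last m) f

theorem Fin.card_filter_succ_ne_castSucc_le {n : ℕ} {g : Fin (n + 1) → ℤ} (hg : Monotone g) :
    (#{i : Fin n | g i.succ ≠ g i.castSucc} : ℤ) ≤ g (Fin.last n) - g 0 := by
  rw [← Fin.sum_univ_succ_sub_castSucc, card_filter, Nat.cast_sum]
  refine sum_le_sum fun i _ => ?_
  have := hg (Fin.castSucc_le_succ i)
  split_ifs <;> push_cast <;> omega

section
variable {α β E : Type*} [NormedAddCommGroup E]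

theorem sum_le_pVar {p a b : ℝ} {x : ℝ → E} {n : ℕ} {t : Fin (n + 1) → ℝ} (ht : StrictMono t)
    (ht0 : t 0 = a) (htn : t (Fin.last n) = b) :
    ∑ i : Fin n, (‖x (t i.succ) - x (t i.castSucc)‖₊ : ℝ≥0∞) ^ p ≤ pVar p a b x :=
  le_iSup_of_le n <| le_iSup_of_le t <| le_iSup_of_le ht <| le_iSup_of_le ht0 <|
    le_iSup_of_le htn le_rfl

theorem pVar_le_of_constant_on_level_sets {p a b : ℝ} (hp : 0 < p) {g : ℝ → ℤ}
    (hg : Monotone g) {k : ℕ} (hgk : g b = g a + k) {x : ℝ → E}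
    (hx : ∀ s t, g s = g t → x s = x t) {c : ℝ≥0} (hc : ∀ s t, ‖x s - x t‖₊ ≤ c) :
    pVar p a b x ≤ k * (c : ℝ≥0∞) ^ p := by
  refine iSup_le fun n => iSup_le fun t => iSup_le fun ht => iSup_le fun ht0 =>
    iSup_le fun htn => ?_
  have hjumps : #{i : Fin n | g (t i.succ) ≠ g (t i.castSucc)} ≤ k := by
    have := Fin.card_filter_succ_ne_castSucc_le (hg.comp ht.monotone)
    simp only [Function.comp_apply, htn, ht0, hgk] at this
    omega
  calc ∑ i : Fin n, (‖x (t i.succ) - x (t i.castSucc)‖₊ : ℝ≥0∞) ^ p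
      ≤ ∑ i : Fin n, (if g (t i.succ) ≠ g (t i.castSucc) then 1 else 0) * (c : ℝ≥0∞) ^ p := by
        refine sum_le_sum fun i _ => ?_
        split_ifs with h
        · simpa using ENNReal.rpow_le_rpow (by exact_mod_cast hc _ _) hp.le
        · simp [hx _ _ (not_not.1 h), hp]
    _ = #{i : Fin n | g (t i.succ) ≠ g (t i.castSucc)} * (c : ℝ≥0∞) ^ p := by
        rw [← sum_mul, natCast_card_filter]
    _ ≤ k * (c : ℝ≥0∞) ^ p := by gcongr

/-- Equal to `u` and `w` alternately on the `k` consecutive intervals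
`[a + j (b - a) / k, a + (j + 1) (b - a) / k)`. -/
noncomputable def zigzag (a b : ℝ) (k : ℕ) (u w : α) (t : ℝ) : α :=
  if Even ⌊k * (t - a) / (b - a)⌋ then u else w

theorem comp_zigzag (f : α → β) (a b : ℝ) (k : ℕ) (u w : α) :
    f ∘ zigzag a b k u w = zigzag a b k (f u) (f w) :=
  funext fun _ => apply_ite f _ u w

@[simp]
theorem zigzag_left (a b : ℝ) (k : ℕ) (u w : α) : zigzag a b k u w a = u := by
  simp [zigzag]

theorem zigzag_grid {a b : ℝ} (hab : a < b) {k : ℕ} (hk : k ≠ 0) (u w : α) (j : ℕ) :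
    zigzag a b k u w (a + j * (b - a) / k) = if Even j then u else w := by
  have hba : b - a ≠ 0 := sub_ne_zero.2 hab.ne'
  have : (k : ℝ) * (a + j * (b - a) / k - a) / (b - a) = j := by field_simp; ring
  simp only [zigzag, this, Int.floor_natCast, Int.even_coe_nat]

theorem pVar_zigzag_le {p a b : ℝ} (hp : 0 < p) (hab : a < b) (k : ℕ) (u w : E) :
    pVar p a b (zigzag a b k u w) ≤ k * (‖u - w‖₊ : ℝ≥0∞) ^ p := by
  refine pVar_le_of_constant_on_level_sets hp (g := fun t => ⌊k * (t - a) / (b - a)⌋)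
    (fun s t hst => Int.floor_mono ?_) ?_ (fun s t h => by simp only [zigzag, h]) fun s t => ?_
  · have := sub_pos.2 hab
    gcongr
  · simp [(sub_pos.2 hab).ne']
  · unfold zigzag
    split_ifs <;> simp [← nnnorm_neg (w - u)]

theorem natCast_mul_le_pVar_zigzag {p a b : ℝ} (hab : a < b) (k : ℕ) (u w : E) :
    k * (‖u - w‖₊ : ℝ≥0∞) ^ p ≤ pVar p a b (zigzag a b k u w) := by
  rcases eq_or_ne k 0 with rfl | hk
  · simp
  have hba := sub_pos.2 hab
  let t : Fin (k + 1) → ℝ := fun j => a + (j : ℕ) * (b - a) / k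
  have ht : StrictMono t := fun i j hij => by
    have : ((i : ℕ) : ℝ) < (j : ℕ) := by exact_mod_cast hij
    simp only [t]
    gcongr
  have hjump : ∀ i : Fin k, ‖zigzag a b k u w (t i.succ) - zigzag a b k u w (t i.castSucc)‖₊
      = ‖u - w‖₊ := fun i => by
    simp only [t, Fin.val_succ, Fin.val_castSucc, Nat.cast_succ]
    rw [← Nat.cast_succ, zigzag_grid hab hk, zigzag_grid hab hk]
    rcases Nat.even_or_odd (i : ℕ) with h | h
    · simp [h, Nat.even_add_one, ← nnnorm_neg (w - u)]
    · simp [Nat.not_even_iff_odd.2 h, Nat.even_add_one]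
  calc k * (‖u - w‖₊ : ℝ≥0∞) ^ p
      = ∑ i : Fin k,
          (‖zigzag a b k u w (t i.succ) - zigzag a b k u w (t i.castSucc)‖₊ : ℝ≥0∞) ^ p := by
        simp [hjump]
    _ ≤ pVar p a b (zigzag a b k u w) :=
        sum_le_pVar ht (by simp [t]) (by simp [t]; field_simp; ring)

theorem pVar_zigzag {p a b : ℝ} (hp : 0 < p) (hab : a < b) (k : ℕ) (u w : E) :
    pVar p a b (zigzag a b k u w) = k * (‖u - w‖₊ : ℝ≥0∞) ^ p :=
  (pVar_zigzag_le hp hab k u w).antisymm (natCast_mul_le_pVar_zigzag hab k u w)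

theorem pVar_zigzag_ne_top {p a b : ℝ} (hp : 0 < p) (hab : a < b) (k : ℕ) (u w : E) :
    pVar p a b (zigzag a b k u w) ≠ ⊤ := by
  simp [pVar_zigzag hp hab, ENNReal.mul_eq_top, hp.le]

theorem pVar_zigzag_toReal_rpow {p a b : ℝ} (hp : 0 < p) (hab : a < b) (k : ℕ) (u w : E) :
    (pVar p a b (zigzag a b k u w)).toReal ^ (1 / p) = (k : ℝ) ^ (1 / p) * ‖u - w‖ := by
  rw [pVar_zigzag hp hab, ENNReal.toReal_mul, ← ENNReal.toReal_rpow,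
    Real.mul_rpow (by positivity) (by positivity), ← Real.rpow_mul (by positivity),
    mul_one_div_cancel hp.ne', Real.rpow_one]
  simp

end

theorem le_mul_rpow_of_forall_natCast_rpow_mul_le {p q d D M e : ℝ} (hp : 0 < p) (hq : 0 < q)
    (hd : 0 < d) (hdD : d ≤ D) (hM : 0 ≤ M)
    (h : ∀ k : ℕ, 1 ≤ k → (k : ℝ) ^ (1 / p) * d ≤ D → (k : ℝ) ^ (1 / q) * e ≤ M) :
    e ≤ M * 2 ^ (1 / q) / D ^ (p / q) * d ^ (p / q) := by
  have hD : 0 < D := hd.trans_le hdD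
  rcases lt_or_ge e 0 with he | he
  · exact he.le.trans (by positivity)
  -- test with `k = ⌊X⌋₊`, which lies in `(X / 2, X]` since `1 ≤ X`
  set X := (D / d) ^ p
  have hX : 1 ≤ X := Real.one_le_rpow ((one_le_div hd).2 hdD) hp.le
  have hk : 1 ≤ ⌊X⌋₊ := Nat.le_floor (by exact_mod_cast hX)
  have hkd : (⌊X⌋₊ : ℝ) ^ (1 / p) * d ≤ D := by
    calc (⌊X⌋₊ : ℝ) ^ (1 / p) * d ≤ X ^ (1 / p) * d := by
          gcongr; exact Nat.floor_le (by positivity)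
      _ = D := by
          rw [← Real.rpow_mul (by positivity), mul_one_div_cancel hp.ne', Real.rpow_one,
            div_mul_cancel₀ _ hd.ne']
  have hXk : (X / 2) ^ (1 / q) * e ≤ M := by
    refine le_trans ?_ (h _ hk hkd)
    gcongr
    exact (Nat.div_two_lt_floor hX).le
  have hXq : (X / 2) ^ (1 / q) = D ^ (p / q) / d ^ (p / q) / 2 ^ (1 / q) := by
    rw [Real.div_rpow (by positivity) zero_le_two, ← Real.rpow_mul (by positivity), mul_one_div,
      Real.div_rpow (by positivity) hd.le]
  rw [hXq, ← le_div_iff₀' (by positivity)] at hXk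
  exact hXk.trans_eq (by field_simp)

theorem holder_on_bounded_of_comp_locally_bounded_general {E : Type*} [NormedAddCommGroup E]
    (p q a b : ℝ) (hp : 1 ≤ p) (hpq : p ≤ q) (hab : a < b)
    (f : E → E)
    (hloc : ∀ r : ℝ, 0 < r → ∃ M : ℝ, ∀ x : ℝ → E, pVar p a b x ≠ ⊤ →
      ‖x a‖ + (pVar p a b x).toReal ^ (1 / p) ≤ r →
      ‖f (x a)‖ + (pVar q a b (fun t => f (x t))).toReal ^ (1 / q) ≤ M) :
    ∀ K : Set E, Bornology.IsBounded K → ∃ L : ℝ, 0 ≤ L ∧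
      ∀ u ∈ K, ∀ w ∈ K, ‖f u - f w‖ ≤ L * ‖u - w‖ ^ (p / q) := by
  intro K hK
  have hp0 : 0 < p := zero_lt_one.trans_le hp
  have hq0 : 0 < q := hp0.trans_le hpq
  obtain ⟨R, hR, hRK⟩ := hK.exists_pos_norm_le
  obtain ⟨M, hM⟩ := hloc (3 * R) (by positivity)
  refine ⟨max M 0 * 2 ^ (1 / q) / (2 * R) ^ (p / q), by positivity, fun u hu w hw => ?_⟩
  rcases eq_or_ne u w with rfl | huw
  · simp [Real.zero_rpow (div_pos hp0 hq0).ne']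
  have huw_le : ‖u - w‖ ≤ 2 * R := (norm_sub_le u w).trans (by linarith [hRK u hu, hRK w hw])
  refine le_mul_rpow_of_forall_natCast_rpow_mul_le hp0 hq0 (norm_pos_iff.2 (sub_ne_zero.2 huw))
    huw_le (le_max_right M 0) fun k _ hk => ?_
  have hx : ‖zigzag a b k u w a‖ + (pVar p a b (zigzag a b k u w)).toReal ^ (1 / p) ≤ 3 * R := by
    rw [zigzag_left, pVar_zigzag_toReal_rpow hp0 hab]
    linarith [hRK u hu]
  have hfx := hM _ (pVar_zigzag_ne_top hp0 hab k u w) hx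
  rw [zigzag_left, ← Function.comp_def, comp_zigzag, pVar_zigzag_toReal_rpow hq0 hab] at hfx
  linarith [norm_nonneg (f u), le_max_left M 0]

/-- If the composition operator `C_f` maps `BV_p([a,b],E)` into `BV_q([a,b],E)` and is
locally bounded, then `f` is Hölder continuous with exponent `p/q` on every bounded
subset of `E`. -/
theorem holder_on_bounded_of_comp_locally_bounded {E : Type*} [NormedAddCommGroup E]
    (p q a b : ℝ) (hp : 1 ≤ p) (hpq : p ≤ q) (hab : a < b)
    (f : E → E)
    (hf : ∀ x : ℝ → E, pVar p a b x ≠ ⊤ → pVar q a b (fun t => f (x t)) ≠ ⊤)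
    (hloc : ∀ r : ℝ, 0 < r → ∃ M : ℝ, ∀ x : ℝ → E, pVar p a b x ≠ ⊤ →
      ‖x a‖ + (pVar p a b x).toReal ^ (1 / p) ≤ r →
      ‖f (x a)‖ + (pVar q a b (fun t => f (x t))).toReal ^ (1 / q) ≤ M) :
    ∀ K : Set E, Bornology.IsBounded K → ∃ L : ℝ, 0 ≤ L ∧
      ∀ u ∈ K, ∀ w ∈ K, ‖f u - f w‖ ≤ L * ‖u - w‖ ^ (p / q) :=
  holder_on_bounded_of_comp_locally_bounded_general p q a b hp hpq hab f hloc
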